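/- arXiv:1905.00569 — 2 statements merged into one kernel-verified Lean document; each statement's English description precedes it below -/
import Mathlib

section
/- Let β_a, β_b > 0, let F_a : (0, ∞) → (0, 1) be strictly increasing and F_b : (0, ∞) → (0, 1) be strictly decreasing. Define sequences N_a(t), N_b(t) for positive integers t by: N_a(1), N_b(1) > 0 with N_a(1)/N_b(1) = β_a/β_b, and, writing r(t) = N_a(t)/N_b(t), N_a(t+1) = N_a(t)·F_a(r(t)) + β_a and N_b(t+1) = N_b(t)·F_b(r(t)) + β_b. Assume N_a(2) > N_a(1) and N_b(2) > N_b(1). If F_a(r(1)) < F_b(r(1)), then for every positive integer t: r(t+1) < r(t); F_a(r(t+1)) < F_a(r(t)) < F_b(r(t)) < F_b(r(t+1)); and N_b(t) < β_b/(1 − F_b(r(t))). In particular r(t) is strictly decreasing and converges to a limit ℓ with 0 ≤ ℓ < r(1). If instead F_a(r(1)) = F_b(r(1)), then r(t) = r(1) for all t. -/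
open Filter

private lemma ratio_step (βa βb N M fa fb : ℝ)
    (hE : βa * M - βb * N < N * M * (fb - fa)) :
    (N * fa + βa) * M < N * (M * fb + βb) := by nlinarith

private lemma sat_step (βb M fb fb' : ℝ) (hβb : 0 < βb) (hM : 0 < M)
    (hfb0 : 0 < fb) (hfble : fb ≤ fb') (hM' : 0 < M * fb + βb)
    (hsat : M * (1 - fb) < βb) : (M * fb + βb) * (1 - fb') < βb := by
  have h1 : (M * fb + βb) * (1 - fb) < βb := by nlinarith
  nlinarith

private lemma E_step (βa βb N M fa fb fa' fb' : ℝ) (hβa : 0 < βa) (hβb : 0 < βb)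
    (hN : 0 < N) (hM : 0 < M)
    (hfa0 : 0 < fa) (hfa1 : fa < 1) (hfb0 : 0 < fb) (hfb1 : fb < 1) (hlt : fa < fb)
    (hsat : M * (1 - fb) < βb) (hE : βa * M - βb * N < N * M * (fb - fa))
    (hfa' : fa' < fa) (hfb' : fb < fb') :
    βa * (M * fb + βb) - βb * (N * fa + βa)
      < (N * fa + βa) * (M * fb + βb) * (fb' - fa') := by
  have hN' : 0 < N * fa + βa := by positivity
  have hM' : 0 < M * fb + βb := by positivity
  have hD' : fb - fa < fb' - fa' := by linarith
  rcases le_or_gt (N * (1 - fa)) βa with hc | hc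
  · have key : βa * (M * fb + βb) - βb * (N * fa + βa)
        = N * (fb - fa) * (M * fb + βb)
          - fb * (N * M * (fb - fa) - (βa * M - βb * N)) := by ring
    have h1 : βa * (M * fb + βb) - βb * (N * fa + βa) < N * (fb - fa) * (M * fb + βb) := by
      rw [key]; nlinarith
    have h2 : N * (fb - fa) * (M * fb + βb) ≤ (N * fa + βa) * (fb - fa) * (M * fb + βb) :=
      mul_le_mul_of_nonneg_right
        (mul_le_mul_of_nonneg_right (by linarith) (by linarith)) hM'.le
    have h3 : (N * fa + βa) * (fb - fa) * (M * fb + βb)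
        < (N * fa + βa) * (M * fb + βb) * (fb' - fa') := by
      nlinarith [mul_lt_mul_of_pos_left hD' (mul_pos hN' hM')]
    linarith
  · have hsat' : (M * fb + βb) * (1 - fb) < βb := by nlinarith
    have h3 : βa < (N * fa + βa) * (1 - fa) := by nlinarith
    have h4 : (N * fa + βa) * ((M * fb + βb) * (1 - fb)) < (N * fa + βa) * βb := by nlinarith
    have h5 : βa * (M * fb + βb) < (N * fa + βa) * (1 - fa) * (M * fb + βb) := by nlinarith
    have h6 : (N * fa + βa) * (1 - fa) * (M * fb + βb)
        = (N * fa + βa) * (M * fb + βb) * (fb - fa)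
          + (N * fa + βa) * ((M * fb + βb) * (1 - fb)) := by ring
    have h7 : (N * fa + βa) * (M * fb + βb) * (fb - fa)
        < (N * fa + βa) * (M * fb + βb) * (fb' - fa') := by
      nlinarith [mul_lt_mul_of_pos_left hD' (mul_pos hN' hM')]
    linarith

/-- Theorem 2 of the paper (abstract form): under the retention dynamics driven by the
ratio r(t) = N_a(t)/N_b(t), with group a's retention map F_a increasing in r and group
b's retention map F_b decreasing in r, if group a retains less at the first step then
the ratio strictly decreases forever, the losses/retentions are ordered monotonically,
N_b stays below its saturation level, and the ratio converges; if the first-step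
retentions are equal, the ratio stays constant. -/
theorem stmt_9 (βa βb : ℝ) (hβa : 0 < βa) (hβb : 0 < βb)
    (Fa Fb : ℝ → ℝ)
    (hFaMono : StrictMonoOn Fa (Set.Ioi 0))
    (hFbAnti : StrictAntiOn Fb (Set.Ioi 0))
    (hFa01 : ∀ x ∈ Set.Ioi (0 : ℝ), Fa x ∈ Set.Ioo (0 : ℝ) 1)
    (hFb01 : ∀ x ∈ Set.Ioi (0 : ℝ), Fb x ∈ Set.Ioo (0 : ℝ) 1)
    (Na Nb : ℕ → ℝ) (hNa1 : 0 < Na 1) (hNb1 : 0 < Nb 1)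
    (hinit : Na 1 / Nb 1 = βa / βb)
    (hrecA : ∀ t, 1 ≤ t → Na (t + 1) = Na t * Fa (Na t / Nb t) + βa)
    (hrecB : ∀ t, 1 ≤ t → Nb (t + 1) = Nb t * Fb (Na t / Nb t) + βb)
    (hA2 : Na 1 < Na 2) (hB2 : Nb 1 < Nb 2) :
    (Fa (Na 1 / Nb 1) < Fb (Na 1 / Nb 1) →
      (∀ t, 1 ≤ t →
        Na (t + 1) / Nb (t + 1) < Na t / Nb t ∧
        Fa (Na (t + 1) / Nb (t + 1)) < Fa (Na t / Nb t) ∧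
        Fa (Na t / Nb t) < Fb (Na t / Nb t) ∧
        Fb (Na t / Nb t) < Fb (Na (t + 1) / Nb (t + 1)) ∧
        Nb t < βb / (1 - Fb (Na t / Nb t))) ∧
      (∃ l : ℝ, 0 ≤ l ∧ l < Na 1 / Nb 1 ∧
        Tendsto (fun t => Na t / Nb t) atTop (nhds l))) ∧
    (Fa (Na 1 / Nb 1) = Fb (Na 1 / Nb 1) →
      ∀ t, 1 ≤ t → Na t / Nb t = Na 1 / Nb 1) := by
  have hr1 : Na 1 * βb = βa * Nb 1 := (div_eq_div_iff hNb1.ne' hβb.ne').mp hinit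
  constructor
  · intro hlt
    -- the invariant bundle
    have inv : ∀ t, 1 ≤ t → (0 < Na t ∧ 0 < Nb t ∧
        Fa (Na t / Nb t) < Fb (Na t / Nb t) ∧
        Nb t * (1 - Fb (Na t / Nb t)) < βb ∧
        βa * Nb t - βb * Na t
          < Na t * Nb t * (Fb (Na t / Nb t) - Fa (Na t / Nb t))) := by
      intro t ht
      induction t, ht using Nat.le_induction with
      | base =>
        refine ⟨hNa1, hNb1, hlt, ?_, ?_⟩
        · have h2 := hrecB 1 le_rfl
          rw [h2] at hB2; nlinarith
        · have h0 : βa * Nb 1 - βb * Na 1 = 0 := by linarith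
          have hpos : 0 < Na 1 * Nb 1 * (Fb (Na 1 / Nb 1) - Fa (Na 1 / Nb 1)) := by
            apply mul_pos (mul_pos hNa1 hNb1); linarith
          linarith
      | succ t ht ih =>
        obtain ⟨hNat, hNbt, hfafb, hsat, hE⟩ := ih
        have hrpos : Na t / Nb t ∈ Set.Ioi (0 : ℝ) := Set.mem_Ioi.mpr (div_pos hNat hNbt)
        obtain ⟨hfa0, hfa1⟩ := hFa01 _ hrpos
        obtain ⟨hfb0, hfb1⟩ := hFb01 _ hrpos
        have hA := hrecA t ht
        have hB := hrecB t ht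
        have hNa' : 0 < Na (t + 1) := by rw [hA]; positivity
        have hNb' : 0 < Nb (t + 1) := by rw [hB]; positivity
        have hratio : Na (t + 1) * Nb t < Na t * Nb (t + 1) := by
          rw [hA, hB]; exact ratio_step βa βb (Na t) (Nb t) _ _ hE
        have hrlt : Na (t + 1) / Nb (t + 1) < Na t / Nb t :=
          (div_lt_div_iff₀ hNb' hNbt).mpr hratio
        have hr'pos : Na (t + 1) / Nb (t + 1) ∈ Set.Ioi (0 : ℝ) :=
          Set.mem_Ioi.mpr (div_pos hNa' hNb')
        have hfa' : Fa (Na (t + 1) / Nb (t + 1)) < Fa (Na t / Nb t) :=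
          hFaMono hr'pos hrpos hrlt
        have hfb' : Fb (Na t / Nb t) < Fb (Na (t + 1) / Nb (t + 1)) :=
          hFbAnti hr'pos hrpos hrlt
        refine ⟨hNa', hNb', by linarith, ?_, ?_⟩
        · have hsat' : (Nb t * Fb (Na t / Nb t) + βb)
              * (1 - Fb (Na (t + 1) / Nb (t + 1))) < βb :=
            sat_step βb (Nb t) _ _ hβb hNbt hfb0 hfb'.le (by positivity) hsat
          rw [← hB] at hsat'; exact hsat'
        · have hE' : βa * (Nb t * Fb (Na t / Nb t) + βb)
              - βb * (Na t * Fa (Na t / Nb t) + βa)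
              < (Na t * Fa (Na t / Nb t) + βa) * (Nb t * Fb (Na t / Nb t) + βb)
                * (Fb (Na (t + 1) / Nb (t + 1)) - Fa (Na (t + 1) / Nb (t + 1))) :=
            E_step βa βb (Na t) (Nb t) _ _ _ _ hβa hβb hNat hNbt hfa0 hfa1 hfb0 hfb1
              hfafb hsat hE hfa' hfb'
          rw [← hA, ← hB] at hE'; exact hE'
    have main : ∀ t, 1 ≤ t →
        Na (t + 1) / Nb (t + 1) < Na t / Nb t ∧
        Fa (Na (t + 1) / Nb (t + 1)) < Fa (Na t / Nb t) ∧
        Fa (Na t / Nb t) < Fb (Na t / Nb t) ∧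
        Fb (Na t / Nb t) < Fb (Na (t + 1) / Nb (t + 1)) ∧
        Nb t < βb / (1 - Fb (Na t / Nb t)) := by
      intro t ht
      obtain ⟨hNat, hNbt, hfafb, hsat, hE⟩ := inv t ht
      have hrpos : Na t / Nb t ∈ Set.Ioi (0 : ℝ) := Set.mem_Ioi.mpr (div_pos hNat hNbt)
      obtain ⟨hfa0, hfa1⟩ := hFa01 _ hrpos
      obtain ⟨hfb0, hfb1⟩ := hFb01 _ hrpos
      have hA := hrecA t ht
      have hB := hrecB t ht
      have hNa' : 0 < Na (t + 1) := by rw [hA]; positivity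
      have hNb' : 0 < Nb (t + 1) := by rw [hB]; positivity
      have hratio : Na (t + 1) * Nb t < Na t * Nb (t + 1) := by
        rw [hA, hB]; exact ratio_step βa βb (Na t) (Nb t) _ _ hE
      have hrlt : Na (t + 1) / Nb (t + 1) < Na t / Nb t :=
        (div_lt_div_iff₀ hNb' hNbt).mpr hratio
      have hr'pos : Na (t + 1) / Nb (t + 1) ∈ Set.Ioi (0 : ℝ) :=
        Set.mem_Ioi.mpr (div_pos hNa' hNb')
      refine ⟨hrlt, hFaMono hr'pos hrpos hrlt, hfafb, hFbAnti hr'pos hrpos hrlt, ?_⟩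
      exact (lt_div_iff₀ (by linarith : (0:ℝ) < 1 - Fb (Na t / Nb t))).mpr (by linarith)
    refine ⟨main, ?_⟩
    set g : ℕ → ℝ := fun n => Na (n + 1) / Nb (n + 1) with hg
    have gpos : ∀ n, 0 < g n := fun n =>
      div_pos (inv (n + 1) (Nat.le_add_left 1 n)).1 (inv (n + 1) (Nat.le_add_left 1 n)).2.1
    have gdec : ∀ n, g (n + 1) < g n := fun n =>
      (main (n + 1) (Nat.le_add_left 1 n)).1
    have hanti : Antitone g := antitone_nat_of_succ_le fun n => (gdec n).le
    have hbdd : BddBelow (Set.range g) := ⟨0, by rintro x ⟨n, rfl⟩; exact (gpos n).le⟩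
    have htend : Tendsto g atTop (nhds (⨅ n, g n)) := tendsto_atTop_ciInf hanti hbdd
    refine ⟨⨅ n, g n, le_ciInf fun n => (gpos n).le, ?_, ?_⟩
    · calc ⨅ n, g n ≤ g 1 := ciInf_le hbdd 1
        _ < g 0 := gdec 0
        _ = Na 1 / Nb 1 := rfl
    · exact (tendsto_add_atTop_iff_nat 1).mp htend
  · intro heq t ht
    have inv2 : ∀ t, 1 ≤ t → (0 < Na t ∧ 0 < Nb t ∧ Na t * Nb 1 = Na 1 * Nb t) := by
      intro t ht
      induction t, ht using Nat.le_induction with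
      | base => exact ⟨hNa1, hNb1, rfl⟩
      | succ t ht ih =>
        obtain ⟨hNat, hNbt, hprop⟩ := ih
        have hreq : Na t / Nb t = Na 1 / Nb 1 :=
          (div_eq_div_iff hNbt.ne' hNb1.ne').mpr hprop
        have hr1pos : Na 1 / Nb 1 ∈ Set.Ioi (0 : ℝ) := Set.mem_Ioi.mpr (div_pos hNa1 hNb1)
        obtain ⟨hfa0, hfa1⟩ := hFa01 _ hr1pos
        obtain ⟨hfb0, hfb1⟩ := hFb01 _ hr1pos
        have hA := hrecA t ht
        have hB := hrecB t ht
        rw [hreq] at hA hB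
        refine ⟨?_, ?_, ?_⟩
        · rw [hA]; positivity
        · rw [hB]; positivity
        · rw [hA, hB, heq]
          linear_combination Fb (Na 1 / Nb 1) * hprop - hr1
    obtain ⟨hNat, hNbt, hprop⟩ := inv2 t ht
    exact (div_eq_div_iff hNbt.ne' hNb1.ne').mpr hprop
end

section
/- Let L_a, L_b : ℝ → ℝ be functions each of which attains a global minimum, and set v = max(inf_θ L_a(θ), inf_θ L_b(θ)). Assume v lies in the range of L_a and in the range of L_b. Then for any ᾱ_a, ᾱ_b ≥ 0 with ᾱ_a + ᾱ_b = 1, the infimum of ᾱ_a L_a(θ_a) + ᾱ_b L_b(θ_b) over all pairs (θ_a, θ_b) with L_a(θ_a) = L_b(θ_b) equals v, and a pair (θ_a, θ_b) with L_a(θ_a) = L_b(θ_b) attains this infimum if and only if L_a(θ_a) = L_b(θ_b) = v. -/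
/-- Theorem 3 (one-shot part) of the paper: under the equalized-loss constraint, the
optimal value of the one-shot problem is v = max(inf L_a, inf L_b), and a constrained
pair attains this value iff both group losses equal v. -/
theorem stmt_12 (La Lb : ℝ → ℝ)
    (hLa : ∃ θ, ∀ θ', La θ ≤ La θ') (hLb : ∃ θ, ∀ θ', Lb θ ≤ Lb θ')
    (v : ℝ) (hv : v = max (⨅ θ, La θ) (⨅ θ, Lb θ))
    (hva : v ∈ Set.range La) (hvb : v ∈ Set.range Lb)
    (αa αb : ℝ) (hαa : 0 ≤ αa) (hαb : 0 ≤ αb) (hsum : αa + αb = 1) :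
    sInf {z : ℝ | ∃ θa θb : ℝ, La θa = Lb θb ∧ z = αa * La θa + αb * Lb θb} = v ∧
    (∀ θa θb : ℝ, La θa = Lb θb →
      (αa * La θa + αb * Lb θb = v ↔ (La θa = v ∧ Lb θb = v))) := by
  obtain ⟨θ0, h0⟩ := hLa
  obtain ⟨θ1, h1⟩ := hLb
  have bda : BddBelow (Set.range La) := ⟨La θ0, by rintro x ⟨θ, rfl⟩; exact h0 θ⟩
  have bdb : BddBelow (Set.range Lb) := ⟨Lb θ1, by rintro x ⟨θ, rfl⟩; exact h1 θ⟩
  have hva' : ∀ θ, (⨅ θ, La θ) ≤ La θ := fun θ => ciInf_le bda θ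
  have hvb' : ∀ θ, (⨅ θ, Lb θ) ≤ Lb θ := fun θ => ciInf_le bdb θ
  have key : ∀ θa θb : ℝ, La θa = Lb θb →
      αa * La θa + αb * Lb θb = La θa ∧ v ≤ La θa := by
    intro θa θb h
    refine ⟨by linear_combination La θa * hsum - αb * h, ?_⟩
    rw [hv, max_le_iff]
    exact ⟨hva' θa, h ▸ hvb' θb⟩
  obtain ⟨θva, hθva⟩ := hva
  obtain ⟨θvb, hθvb⟩ := hvb
  have hmem : v ∈ {z : ℝ | ∃ θa θb : ℝ, La θa = Lb θb ∧ z = αa * La θa + αb * Lb θb} :=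
    ⟨θva, θvb, by rw [hθva, hθvb], by rw [hθva, hθvb]; linear_combination (-v) * hsum⟩
  have hbd : BddBelow {z : ℝ | ∃ θa θb : ℝ, La θa = Lb θb ∧ z = αa * La θa + αb * Lb θb} := by
    refine ⟨v, ?_⟩
    rintro x ⟨θa, θb, h, rfl⟩
    rw [(key θa θb h).1]
    exact (key θa θb h).2
  constructor
  · apply le_antisymm (csInf_le hbd hmem)
    apply le_csInf ⟨v, hmem⟩
    rintro x ⟨θa, θb, h, rfl⟩
    rw [(key θa θb h).1]
    exact (key θa θb h).2
  · intro θa θb h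
    rw [(key θa θb h).1]
    exact ⟨fun hvv => ⟨hvv, h ▸ hvv⟩, fun ⟨ha, _⟩ => ha⟩
end
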